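/- In the setting of vibrations: suppose a ≥_τ b are elements of D with componentwise min c and max d, and e, g ∈ D satisfy e_j ≤ min(g_j, c_j) for all j and the multiset of all entries of (e,g) equals that of (a,b), with e ≠ c and g ≠ d. Then the diagonal monomial of (e,g), namely ∏_i x_{i,e_i} x_{i,g_i}, is strictly smaller in the lexicographic order τ on K[x_{i,j}] than the diagonal monomial ∏_i x_{i,a_i} x_{i,b_i} of (a,b). -/
import Mathlib


def lexGT {n : ℕ} (u v : Fin n → ℕ) : Prop :=
  ∃ i : Fin n, u i < v i ∧ ∀ j : Fin n, j < i → u j = v j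

def lexGE {n : ℕ} (u v : Fin n → ℕ) : Prop := u = v ∨ lexGT u v

def inD {n : ℕ} (m : ℕ) (a : Fin n → ℕ) : Prop :=
  (∀ j, 1 ≤ a j) ∧ StrictMono a ∧ ∀ j, a j ≤ m

/-- The multiset of all entries of a tuple. -/
def entries {n : ℕ} (a : Fin n → ℕ) : Multiset ℕ :=
  Finset.univ.val.map a

/-- Exponent vector of the product of diagonal monomials
`∏ᵢ x_{i, u i} · ∏ᵢ x_{i, v i}`. -/
def expDiag {n : ℕ} (u v : Fin n → ℕ) : Fin n × ℕ → ℕ :=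
  fun q => (if u q.1 = q.2 then 1 else 0) + (if v q.1 = q.2 then 1 else 0)

/-- `M >_τ N` for monomials in `x_{i,j}` (exponent vectors), with
`x_{i,j} > x_{l,k}` iff `i < l` or (`i = l` and `j < k`). -/
def monGT {n : ℕ} (M N : Fin n × ℕ → ℕ) : Prop :=
  ∃ p : Fin n × ℕ, N p < M p ∧
    ∀ q : Fin n × ℕ, (q.1 < p.1 ∨ (q.1 = p.1 ∧ q.2 < p.2)) → M q = N q

lemma count_aux {n : ℕ} (u : Fin n → ℕ) (f : ℕ → ℕ) :
    ((entries u).map f).sum = ∑ i, f (u i) := by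
  simp [entries, Multiset.map_map, Finset.sum, Function.comp_def]

/-- Vibration terms have strictly smaller initial monomial: if `a ≥_τ b` with
componentwise min `c` and max `d`, and `e, g ∈ D` satisfy `e j ≤ min (g j) (c j)` for
all `j`, have the same combined entries as `(a,b)`, and `e ≠ c`, `g ≠ d`, then the
diagonal monomial of `(e,g)` is strictly smaller in τ than that of `(a,b)`. -/
theorem stmt_18 {n m : ℕ} (a b e g : Fin n → ℕ)
    (ha : inD m a) (hb : inD m b) (he : inD m e) (hg : inD m g)
    (hab : lexGE a b)
    (hemin : ∀ j, e j ≤ min (g j) (min (a j) (b j)))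
    (hmult : entries e + entries g = entries a + entries b)
    (hec : e ≠ (fun j => min (a j) (b j)))
    (hgd : g ≠ (fun j => max (a j) (b j))) :
    monGT (expDiag a b) (expDiag e g) := by
  classical
  set c : Fin n → ℕ := fun j => min (a j) (b j) with hc
  set d : Fin n → ℕ := fun j => max (a j) (b j) with hd
  have hecle : ∀ j, e j ≤ c j := fun j => (hemin j).trans (min_le_right _ _)
  have hegle : ∀ j, e j ≤ g j := fun j => (hemin j).trans (min_le_left _ _)
  have hcdle : ∀ j, c j ≤ d j := fun j => min_le_of_left_le (le_max_left _ _)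
  have hcm : StrictMono c := fun i j hij =>
    lt_min ((min_le_left _ _).trans_lt (ha.2.1 hij))
      ((min_le_right _ _).trans_lt (hb.2.1 hij))
  have hdm : StrictMono d := fun i j hij =>
    max_lt ((ha.2.1 hij).trans_le (le_max_left _ _))
      ((hb.2.1 hij).trans_le (le_max_right _ _))
  -- counting identity
  have hcount : ∀ t : ℕ,
      (∑ i, ((if e i < t then 1 else 0) + (if g i < t then 1 else 0)) : ℕ)
      = ∑ i, ((if c i < t then 1 else 0) + (if d i < t then 1 else 0)) := by
    intro t
    have h1 := congrArg
      (fun s => (Multiset.map (fun x => if x < t then (1:ℕ) else 0) s).sum) hmult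
    simp only [Multiset.map_add, Multiset.sum_add, count_aux] at h1
    have h2 : ∀ i : Fin n, ((if a i < t then 1 else 0) + (if b i < t then 1 else 0) : ℕ)
        = (if c i < t then 1 else 0) + (if d i < t then 1 else 0) := by
      intro i
      rcases le_total (a i) (b i) with h | h
      · simp [hc, hd, min_eq_left h, max_eq_right h]
      · simp [hc, hd, min_eq_right h, max_eq_left h, Nat.add_comm]
    calc (∑ i, ((if e i < t then 1 else 0) + (if g i < t then 1 else 0)) : ℕ)
        = (∑ i, (if e i < t then (1:ℕ) else 0)) + ∑ i, (if g i < t then (1:ℕ) else 0) := by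
          rw [Finset.sum_add_distrib]
      _ = (∑ i, (if a i < t then (1:ℕ) else 0)) + ∑ i, (if b i < t then (1:ℕ) else 0) := h1
      _ = ∑ i, ((if a i < t then 1 else 0) + (if b i < t then 1 else 0)) := by
          rw [Finset.sum_add_distrib]
      _ = _ := Finset.sum_congr rfl (fun i _ => h2 i)
  -- the minimal differing row
  have hne : e ≠ c := hec
  obtain ⟨i₁, hi₁⟩ := Function.ne_iff.mp hne
  set S : Finset (Fin n) := Finset.univ.filter (fun i => ¬(e i = c i ∧ g i = d i)) with hS
  have hSne : S.Nonempty := ⟨i₁, by simp [hS, hi₁]⟩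
  set i₀ : Fin n := S.min' hSne with hi₀
  have hi₀S : i₀ ∈ S := S.min'_mem hSne
  have hi₀ne : ¬(e i₀ = c i₀ ∧ g i₀ = d i₀) := (Finset.mem_filter.mp hi₀S).2
  have hbelow : ∀ i : Fin n, i < i₀ → e i = c i ∧ g i = d i := by
    intro i hi
    by_contra h
    exact absurd (S.min'_le i (Finset.mem_filter.mpr ⟨Finset.mem_univ _, h⟩)) (not_le.mpr hi)
  -- Step A : e i₀ = c i₀
  have heA : e i₀ = c i₀ := by
    by_contra h
    have hlt : e i₀ < c i₀ := lt_of_le_of_ne (hecle i₀) h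
    have key := hcount (c i₀)
    have : (∑ i, ((if c i < c i₀ then 1 else 0) + (if d i < c i₀ then 1 else 0)) : ℕ)
        < ∑ i, ((if e i < c i₀ then 1 else 0) + (if g i < c i₀ then 1 else 0)) := by
      apply Finset.sum_lt_sum
      · intro i _
        rcases lt_trichotomy i i₀ with hlt' | heq | hgt
        · rw [(hbelow i hlt').1, (hbelow i hlt').2]
        · subst heq
          simp [lt_irrefl, not_lt.mpr (hcdle i₀)]
        · have h1 : ¬ c i < c i₀ := not_lt.mpr (hcm hgt).le
          have h2 : ¬ d i < c i₀ := not_lt.mpr ((hcm hgt).le.trans (hcdle i))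
          simp [h1, h2]
      · refine ⟨i₀, Finset.mem_univ _, ?_⟩
        simp [lt_irrefl, not_lt.mpr (hcdle i₀), hlt]
    omega
  have hgB : g i₀ ≠ d i₀ := fun h => hi₀ne ⟨heA, h⟩
  -- Step C : g i₀ > d i₀
  have hgC : d i₀ < g i₀ := by
    by_contra h
    have hlt : g i₀ < d i₀ := lt_of_le_of_ne (not_lt.mp h) hgB
    have hcd' : c i₀ < d i₀ := lt_of_le_of_lt (heA ▸ hegle i₀) hlt
    have key := hcount (d i₀)
    have : (∑ i, ((if c i < d i₀ then 1 else 0) + (if d i < d i₀ then 1 else 0)) : ℕ)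
        < ∑ i, ((if e i < d i₀ then 1 else 0) + (if g i < d i₀ then 1 else 0)) := by
      apply Finset.sum_lt_sum
      · intro i _
        rcases lt_trichotomy i i₀ with hlt' | heq | hgt
        · rw [(hbelow i hlt').1, (hbelow i hlt').2]
        · subst heq
          simp [lt_irrefl, hcd', heA, hlt]
        · have h2 : ¬ d i < d i₀ := not_lt.mpr (hdm hgt).le
          have h3 : (if c i < d i₀ then (1:ℕ) else 0) ≤ if e i < d i₀ then 1 else 0 := by
            by_cases hci : c i < d i₀
            · simp [hci, lt_of_le_of_lt (hecle i) hci]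
            · simp [hci]
          simp only [h2, if_false, add_zero]
          exact h3.trans (Nat.le_add_right _ _)
      · refine ⟨i₀, Finset.mem_univ _, ?_⟩
        simp [lt_irrefl, hcd', heA, hlt]
    omega
  -- rows agree as exponent vectors
  have hrow : ∀ i (j : ℕ), ((if a i = j then 1 else 0) + (if b i = j then 1 else 0) : ℕ)
      = (if c i = j then 1 else 0) + (if d i = j then 1 else 0) := by
    intro i j
    rcases le_total (a i) (b i) with h | h
    · simp [hc, hd, min_eq_left h, max_eq_right h]
    · simp [hc, hd, min_eq_right h, max_eq_left h, Nat.add_comm]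
  refine ⟨(i₀, d i₀), ?_, ?_⟩
  · show expDiag e g (i₀, d i₀) < expDiag a b (i₀, d i₀)
    have hM : expDiag a b (i₀, d i₀) = (if c i₀ = d i₀ then 1 else 0) + 1 := by
      simp [expDiag, hrow i₀ (d i₀)]
    have hN : expDiag e g (i₀, d i₀) = (if c i₀ = d i₀ then 1 else 0) := by
      simp [expDiag, heA, (ne_of_gt hgC)]
    rw [hM, hN]; omega
  · rintro ⟨i, j⟩ h
    show expDiag a b (i, j) = expDiag e g (i, j)
    simp only at h
    rcases h with h | ⟨h1, h2⟩
    · obtain ⟨h1, h2⟩ := hbelow i h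
      simp [expDiag, hrow i j, h1, h2]
    · subst h1
      have hcj : c i₀ ≠ j ∨ True := Or.inr trivial
      have hdj : d i₀ ≠ j := fun hh => lt_irrefl _ (hh ▸ h2)
      have hgj : g i₀ ≠ j := fun hh => lt_irrefl _ (lt_trans (hh ▸ hgC) h2) |>.elim
      simp [expDiag, hrow i₀ j, heA, hdj, hgj]
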